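/- Let φ : [0,∞) → ℝ be convex with continuous derivative φ', and let z₁, z₂ ≥ 0 be fixed. Then the map α ↦ B_{φ̃}(z₁, z₂; α) on (0,∞), where φ̃(·; α) is the Bregman generator with threshold α, is non-decreasing in α: for 0 < α₁ ≤ α₂ one has B_{φ̃}(z₁, z₂; α₁) ≤ B_{φ̃}(z₁, z₂; α₂). -/

import Mathlib

/-!
Fix `z₂ ≥ 0`. For a threshold `α ≥ z₂` the point `z₂` lies where `φ̃(·; α) = φ`, so the divergence
is `φ̃(z₁; α)` minus the tangent of `φ` at `z₂`, and it grows with `α` because `φ̃(x; α)` does: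
beyond `α` the generator is the tangent of `φ` at `α`, which lies below `φ` and, by monotonicity
of `φ'`, below the tangents at later points. For `α ≤ z₂` the divergence is `φ̃(z₁; α)` minus the
tangent of `φ` at `α`, and this grows with `α` because, to the left of `α`, tangents at later
points lie lower. Monotonicity on `[0, z₂]` and on `[z₂, ∞)` glue to monotonicity on `[0, ∞)`.
-/

/-- The Bregman divergence with generator `ψ` whose derivative is `ψ'`. -/
noncomputable def bregmanD (ψ ψ' : ℝ → ℝ) (z₁ z₂ : ℝ) : ℝ :=
  ψ z₁ - ψ z₂ - ψ' z₂ * (z₁ - z₂)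

/-- The Bregman generator with threshold `α`, with derivative `x ↦ φ'(min(x,α))`. -/
noncomputable def phiTilde (φ φ' : ℝ → ℝ) (α : ℝ) (x : ℝ) : ℝ :=
  if x ≤ α then φ x else φ α + φ' α * (x - α)

open Set

namespace ConvexOn

variable {S : Set ℝ} {f f' : ℝ → ℝ} {x y d : ℝ}

lemma add_deriv_mul_sub_le (hf : ConvexOn ℝ S f) (hx : x ∈ S) (hy : y ∈ S)
    (hd : HasDerivWithinAt f d S x) : f x + d * (y - x) ≤ f y := by
  rcases lt_trichotomy x y with hxy | rfl | hyx
  · have h := hf.le_slope_of_hasDerivWithinAt hx hy hxy hd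
    rw [slope_def_field, le_div_iff₀ (sub_pos.2 hxy)] at h
    linarith
  · simp
  · have h := hf.slope_le_of_hasDerivWithinAt hy hx hyx hd
    rw [slope_def_field, div_le_iff₀ (sub_pos.2 hyx)] at h
    linarith

lemma monotoneOn_of_hasDerivWithinAt (hf : ConvexOn ℝ S f)
    (hf' : ∀ x ∈ S, HasDerivWithinAt f (f' x) S x) : MonotoneOn f' S := by
  intro x hx y hy hxy
  rcases hxy.eq_or_lt with rfl | hxy
  · rfl
  exact (hf.le_slope_of_hasDerivWithinAt hx hy hxy (hf' x hx)).trans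
    (hf.slope_le_of_hasDerivWithinAt hx hy hxy (hf' y hy))

end ConvexOn

section phiTilde

variable {φ φ' : ℝ → ℝ} {α x z₁ z₂ : ℝ}

lemma phiTilde_of_le (h : x ≤ α) : phiTilde φ φ' α x = φ x := if_pos h

lemma phiTilde_of_ge (h : α ≤ x) : phiTilde φ φ' α x = φ α + φ' α * (x - α) := by
  rcases h.eq_or_lt with rfl | h
  · simp [phiTilde]
  · exact if_neg h.not_ge

lemma bregmanD_phiTilde_of_le (h : z₂ ≤ α) :
    bregmanD (phiTilde φ φ' α) (fun x => φ' (min x α)) z₁ z₂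
      = phiTilde φ φ' α z₁ - (φ z₂ + φ' z₂ * (z₁ - z₂)) := by
  rw [bregmanD, phiTilde_of_le h, min_eq_left h]
  ring

lemma bregmanD_phiTilde_of_ge (h : α ≤ z₂) :
    bregmanD (phiTilde φ φ' α) (fun x => φ' (min x α)) z₁ z₂
      = phiTilde φ φ' α z₁ - (φ α + φ' α * (z₁ - α)) := by
  rw [bregmanD, phiTilde_of_ge h, min_eq_right h]
  ring

lemma monotoneOn_phiTilde_threshold (hf : ConvexOn ℝ (Ici 0) φ)
    (hf' : ∀ x ∈ Ici (0 : ℝ), HasDerivWithinAt φ (φ' x) (Ici 0) x) (x : ℝ) :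
    MonotoneOn (fun α => phiTilde φ φ' α x) (Ici 0) := by
  intro α hα β hβ hαβ
  dsimp only
  rcases le_or_gt x α with hxα | hαx
  · rw [phiTilde_of_le hxα, phiTilde_of_le (hxα.trans hαβ)]
  rw [phiTilde_of_ge hαx.le]
  rcases le_or_gt x β with hxβ | hβx
  · rw [phiTilde_of_le hxβ]
    exact hf.add_deriv_mul_sub_le hα (mem_Ici.2 (hα.trans hαx.le)) (hf' α hα)
  rw [phiTilde_of_ge hβx.le]
  calc φ α + φ' α * (x - α) = (φ α + φ' α * (β - α)) + φ' α * (x - β) := by ring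
    _ ≤ φ β + φ' β * (x - β) :=
      add_le_add (hf.add_deriv_mul_sub_le hα hβ (hf' α hα))
        (mul_le_mul_of_nonneg_right (hf.monotoneOn_of_hasDerivWithinAt hf' hα hβ hαβ)
          (sub_nonneg.2 hβx.le))

lemma monotoneOn_phiTilde_sub_tangent (hf : ConvexOn ℝ (Ici 0) φ)
    (hf' : ∀ x ∈ Ici (0 : ℝ), HasDerivWithinAt φ (φ' x) (Ici 0) x) (x : ℝ) :
    MonotoneOn (fun α => phiTilde φ φ' α x - (φ α + φ' α * (x - α))) (Ici 0) := by
  intro α hα β hβ hαβ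
  dsimp only
  rcases le_or_gt x α with hxα | hαx
  · rw [phiTilde_of_le hxα, phiTilde_of_le (hxα.trans hαβ)]
    have hβα : φ β + φ' β * (x - β) ≤ φ α + φ' α * (x - α) :=
      calc φ β + φ' β * (x - β) = (φ β + φ' β * (α - β)) + φ' β * (x - α) := by ring
        _ ≤ φ α + φ' α * (x - α) :=
          add_le_add (hf.add_deriv_mul_sub_le hβ hα (hf' β hβ))
            (mul_le_mul_of_nonpos_right (hf.monotoneOn_of_hasDerivWithinAt hf' hα hβ hαβ)
              (sub_nonpos.2 hxα))
    linarith
  rw [phiTilde_of_ge hαx.le, sub_self]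
  rcases le_or_gt x β with hxβ | hβx
  · rw [phiTilde_of_le hxβ, sub_nonneg]
    exact hf.add_deriv_mul_sub_le hβ (mem_Ici.2 (hα.trans hαx.le)) (hf' β hβ)
  · rw [phiTilde_of_ge hβx.le, sub_self]

lemma monotoneOn_bregmanD_phiTilde_Icc (hf : ConvexOn ℝ (Ici 0) φ)
    (hf' : ∀ x ∈ Ici (0 : ℝ), HasDerivWithinAt φ (φ' x) (Ici 0) x) (z₁ z₂ : ℝ) :
    MonotoneOn (fun α => bregmanD (phiTilde φ φ' α) (fun x => φ' (min x α)) z₁ z₂)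
      (Icc 0 z₂) := by
  intro α hα β hβ hαβ
  dsimp only
  rw [bregmanD_phiTilde_of_ge hα.2, bregmanD_phiTilde_of_ge hβ.2]
  exact monotoneOn_phiTilde_sub_tangent hf hf' z₁ hα.1 hβ.1 hαβ

lemma monotoneOn_bregmanD_phiTilde_Ici (hf : ConvexOn ℝ (Ici 0) φ)
    (hf' : ∀ x ∈ Ici (0 : ℝ), HasDerivWithinAt φ (φ' x) (Ici 0) x) (z₁ : ℝ) (hz₂ : 0 ≤ z₂) :
    MonotoneOn (fun α => bregmanD (phiTilde φ φ' α) (fun x => φ' (min x α)) z₁ z₂)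
      (Ici z₂) := by
  intro α hα β hβ hαβ
  dsimp only
  rw [bregmanD_phiTilde_of_le hα, bregmanD_phiTilde_of_le hβ, sub_le_sub_iff_right]
  exact monotoneOn_phiTilde_threshold hf hf' z₁ (hz₂.trans hα) (hz₂.trans hβ) hαβ

end phiTilde

theorem bregman_phiTilde_mono_threshold_general
    (φ φ' : ℝ → ℝ) (hconv : ConvexOn ℝ (Set.Ici 0) φ)
    (hderiv : ∀ x ∈ Set.Ici (0:ℝ), HasDerivWithinAt φ (φ' x) (Set.Ici 0) x)
    (z₁ z₂ : ℝ) (hz₂ : 0 ≤ z₂) :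
    ∀ α₁ α₂ : ℝ, 0 < α₁ → α₁ ≤ α₂ →
      bregmanD (phiTilde φ φ' α₁) (fun x => φ' (min x α₁)) z₁ z₂
        ≤ bregmanD (phiTilde φ φ' α₂) (fun x => φ' (min x α₂)) z₁ z₂ := by
  intro α₁ α₂ hα₁ hα₁₂
  have hmono := (monotoneOn_bregmanD_phiTilde_Icc hconv hderiv z₁ z₂).union_right
    (monotoneOn_bregmanD_phiTilde_Ici hconv hderiv z₁ hz₂) (isGreatest_Icc hz₂) isLeast_Ici
  rw [Icc_union_Ici_eq_Ici hz₂] at hmono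
  exact hmono (mem_Ici.2 hα₁.le) (mem_Ici.2 (hα₁.le.trans hα₁₂)) hα₁₂

/-- For a convex, continuously differentiable generator `φ : [0,∞) → ℝ` and fixed
`z₁, z₂ ≥ 0`, the map `α ↦ B_{φ̃}(z₁, z₂; α)` is non-decreasing in the threshold `α`:
for `0 < α₁ ≤ α₂`, `B_{φ̃}(z₁, z₂; α₁) ≤ B_{φ̃}(z₁, z₂; α₂)`. -/
theorem bregman_phiTilde_mono_threshold
    (φ φ' : ℝ → ℝ) (hconv : ConvexOn ℝ (Set.Ici 0) φ)
    (hderiv : ∀ x ∈ Set.Ici (0:ℝ), HasDerivWithinAt φ (φ' x) (Set.Ici 0) x)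
    (hcont : ContinuousOn φ' (Set.Ici 0))
    (z₁ z₂ : ℝ) (hz₁ : 0 ≤ z₁) (hz₂ : 0 ≤ z₂) :
    ∀ α₁ α₂ : ℝ, 0 < α₁ → α₁ ≤ α₂ →
      bregmanD (phiTilde φ φ' α₁) (fun x => φ' (min x α₁)) z₁ z₂
        ≤ bregmanD (phiTilde φ φ' α₂) (fun x => φ' (min x α₂)) z₁ z₂ :=
  bregman_phiTilde_mono_threshold_general φ φ' hconv hderiv z₁ z₂ hz₂
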